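/- arXiv:0704.2236 — 2 statements merged into one kernel-verified Lean document; each statement's English description precedes it below -/
import Mathlib

section
/- For any quantum state on A, A', B, B', C, C', E there holds S_3(AA':BB':CC'|E) = S_3(A:B:C|A'B'C'E) + S_3(A':B':C'|E) + I(AB:C'|A'B'E) + I(AC:B'|A'C'E) + I(BC:A'|B'C'E). -/
open scoped Classical ComplexOrder

/-- Von Neumann entropy of a matrix (via eigenvalues when Hermitian, 0 otherwise). -/
noncomputable def vNE {n : Type} [Fintype n] [DecidableEq n] (M : Matrix n n ℂ) : ℝ :=
  if h : M.IsHermitian then -∑ i, h.eigenvalues i * Real.log (h.eigenvalues i) else 0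

/-- Partial trace: the marginal of a multipartite matrix on the subsystems in `S`. -/
noncomputable def marg {ι : Type} [Fintype ι] [DecidableEq ι] {d : ι → Type}
    [∀ i, Fintype (d i)] [∀ i, DecidableEq (d i)]
    (ρ : Matrix (∀ i, d i) (∀ i, d i) ℂ) (S : Finset ι) :
    Matrix (∀ i : {j // j ∈ S}, d i.1) (∀ i : {j // j ∈ S}, d i.1) ℂ :=
  fun x y => ∑ z : ∀ i : {j // j ∉ S}, d i.1,
    ρ (fun i => if h : i ∈ S then x ⟨i, h⟩ else z ⟨i, h⟩)
      (fun i => if h : i ∈ S then y ⟨i, h⟩ else z ⟨i, h⟩)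

/-- Von Neumann entropy of the reduced state on the subsystems in `S`. -/
noncomputable def Sen {ι : Type} [Fintype ι] [DecidableEq ι] {d : ι → Type}
    [∀ i, Fintype (d i)] [∀ i, DecidableEq (d i)]
    (ρ : Matrix (∀ i, d i) (∀ i, d i) ℂ) (S : Finset ι) : ℝ :=
  vNE (marg ρ S)

/-- Systems are indexed by `Fin 7`: `0 = A, 1 = A', 2 = B, 3 = B', 4 = C, 5 = C', 6 = E`.
Both sides expand to the same integer combination of marginal entropies. -/
theorem conditional_dual_tripartite_chain_identity_general
    (d : Fin 7 → Type) [∀ i, Fintype (d i)] [∀ i, DecidableEq (d i)]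
    (ρ : Matrix (∀ i, d i) (∀ i, d i) ℂ) :
    Sen ρ {0, 1, 2, 3, 6} + Sen ρ {2, 3, 4, 5, 6} + Sen ρ {0, 1, 4, 5, 6}
        - 2 * Sen ρ Finset.univ - Sen ρ {6}
      = (Sen ρ {0, 1, 2, 3, 5, 6} + Sen ρ {1, 2, 3, 4, 5, 6} + Sen ρ {0, 1, 3, 4, 5, 6}
          - 2 * Sen ρ Finset.univ - Sen ρ {1, 3, 5, 6})
        + (Sen ρ {1, 3, 6} + Sen ρ {3, 5, 6} + Sen ρ {1, 5, 6}
            - 2 * Sen ρ {1, 3, 5, 6} - Sen ρ {6})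
        + (Sen ρ {0, 1, 2, 3, 6} + Sen ρ {1, 3, 5, 6}
            - Sen ρ {0, 1, 2, 3, 5, 6} - Sen ρ {1, 3, 6})
        + (Sen ρ {0, 1, 4, 5, 6} + Sen ρ {1, 3, 5, 6}
            - Sen ρ {0, 1, 3, 4, 5, 6} - Sen ρ {1, 5, 6})
        + (Sen ρ {2, 3, 4, 5, 6} + Sen ρ {1, 3, 5, 6}
            - Sen ρ {1, 2, 3, 4, 5, 6} - Sen ρ {3, 5, 6}) := by
  ring

/-- the chain identity
`S_3(AA':BB':CC'|E) = S_3(A:B:C|A'B'C'E) + S_3(A':B':C'|E) + I(AB:C'|A'B'E)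
  + I(AC:B'|A'C'E) + I(BC:A'|B'C'E)`.
Systems are indexed by `Fin 7`: `0=A, 1=A', 2=B, 3=B', 4=C, 5=C', 6=E`. -/
theorem conditional_dual_tripartite_chain_identity
    (d : Fin 7 → Type) [∀ i, Fintype (d i)] [∀ i, DecidableEq (d i)]
    (ρ : Matrix (∀ i, d i) (∀ i, d i) ℂ)
    (hρ : ρ.PosSemidef) (hTr : ρ.trace = 1) :
    Sen ρ {0, 1, 2, 3, 6} + Sen ρ {2, 3, 4, 5, 6} + Sen ρ {0, 1, 4, 5, 6}
        - 2 * Sen ρ Finset.univ - Sen ρ {6}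
      = (Sen ρ {0, 1, 2, 3, 5, 6} + Sen ρ {1, 2, 3, 4, 5, 6} + Sen ρ {0, 1, 3, 4, 5, 6}
          - 2 * Sen ρ Finset.univ - Sen ρ {1, 3, 5, 6})
        + (Sen ρ {1, 3, 6} + Sen ρ {3, 5, 6} + Sen ρ {1, 5, 6}
            - 2 * Sen ρ {1, 3, 5, 6} - Sen ρ {6})
        + (Sen ρ {0, 1, 2, 3, 6} + Sen ρ {1, 3, 5, 6}
            - Sen ρ {0, 1, 2, 3, 5, 6} - Sen ρ {1, 3, 6})
        + (Sen ρ {0, 1, 4, 5, 6} + Sen ρ {1, 3, 5, 6}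
            - Sen ρ {0, 1, 3, 4, 5, 6} - Sen ρ {1, 5, 6})
        + (Sen ρ {2, 3, 4, 5, 6} + Sen ρ {1, 3, 5, 6}
            - Sen ρ {1, 2, 3, 4, 5, 6} - Sen ρ {3, 5, 6}) :=
  conditional_dual_tripartite_chain_identity_general d ρ
end

section
/- Let g be a continuous real-valued function on density matrices that is monotone on average under a given measurement, i.e. for every state σ, g(σ) ≥ Σ_k q_k g(σ_k), where {q_k, σ_k} is the ensemble produced by the measurement on σ. Then its mixed convex roof E_g(ρ) := inf{ Σ_i p_i g(ρ_i) : Σ_i p_i ρ_i = ρ, p a finite probability distribution, ρ_i density matrices } also satisfies E_g(ρ) ≥ Σ_k q_k E_g(ρ_k) for every state ρ, where {q_k, ρ_k} is the ensemble produced by the measurement on ρ. -/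
open scoped Classical ComplexOrder

/-- `{p i, σs i}` is a finite ensemble of density matrices averaging to `ρ`. -/
def IsEnsemble {n : Type} [Fintype n] [DecidableEq n] {k : ℕ}
    (p : Fin k → ℝ) (σs : Fin k → Matrix n n ℂ) (ρ : Matrix n n ℂ) : Prop :=
  (∀ i, 0 ≤ p i) ∧ (∑ i, p i = 1) ∧
  (∀ i, (σs i).PosSemidef ∧ (σs i).trace = 1) ∧
  (∑ i, (p i : ℂ) • σs i) = ρ

/-- The mixed convex roof of `g`: the infimum of `Σ p_i g(ρ_i)` over all finite
decompositions of `ρ` into density matrices. -/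
noncomputable def mixedRoof {n : Type} [Fintype n] [DecidableEq n]
    (g : Matrix n n ℂ → ℝ) (ρ : Matrix n n ℂ) : ℝ :=
  sInf { r | ∃ (k : ℕ) (p : Fin k → ℝ) (σs : Fin k → Matrix n n ℂ),
    IsEnsemble p σs ρ ∧ r = ∑ i, p i * g (σs i) }

/-!
The map `M ↦ tr M · E_g(M / tr M)`, the perspective of the mixed convex roof, is subadditive
over nonnegative combinations of positive semidefinite matrices: normalising the summands of
`M = Σ wᵢ Nᵢ` gives a decomposition of `M / tr M` into states with weights `wᵢ tr Nᵢ / tr M`.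
Apply this to `Φₖ ρ = Σ pᵢ Φₖ ρᵢ`, where `ρ = Σ pᵢ ρᵢ` is an optimal decomposition, sum over
`k` and use monotonicity of `g` on each `ρᵢ`. The infimum defining `E_g` is finite because the
states form a compact set, on which `g` is bounded below.
-/

open Matrix Finset

variable {n : Type} [Fintype n]

namespace Matrix.PosSemidef

variable {M : Matrix n n ℂ}

lemma trace_re_nonneg (hM : M.PosSemidef) : 0 ≤ M.trace.re :=
  (Complex.nonneg_iff.mp hM.trace_nonneg).1

lemma ofReal_trace_re (hM : M.PosSemidef) : (M.trace.re : ℂ) = M.trace :=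
  (Complex.eq_re_of_ofReal_le (r := 0) (by simpa using hM.trace_nonneg)).symm

lemma eq_zero_of_trace_re_eq_zero (hM : M.PosSemidef) (h : M.trace.re = 0) : M = 0 :=
  hM.trace_eq_zero_iff.mp (by rw [← hM.ofReal_trace_re, h, Complex.ofReal_zero])

/-- Cauchy–Schwarz for the columns of `B`, where `M = Bᴴ * B`. -/
lemma norm_apply_le (hM : M.PosSemidef) (i j : n) :
    ‖M i j‖ ≤ √(M i i).re * √(M j j).re := by
  obtain ⟨B, rfl⟩ : ∃ B : Matrix n n ℂ, M = Bᴴ * B := by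
    open scoped MatrixOrder in
    exact CStarAlgebra.nonneg_iff_eq_star_mul_self.mp hM.nonneg
  let col : n → EuclideanSpace ℂ n := fun a => WithLp.toLp 2 (fun k => B k a)
  have h_inner (a b : n) : (Bᴴ * B) a b = inner ℂ (col a) (col b) := by
    simp [Matrix.mul_apply, PiLp.inner_apply, col, mul_comm]
  have h_norm (a : n) : ‖col a‖ = √((Bᴴ * B) a a).re := by
    rw [norm_eq_sqrt_re_inner (𝕜 := ℂ), h_inner a a]
    rfl
  rw [h_inner, ← h_norm, ← h_norm]
  exact norm_inner_le_norm _ _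

end Matrix.PosSemidef

variable (n) in
def densityMatrices : Set (Matrix n n ℂ) := {M | M.PosSemidef ∧ M.trace = 1}

lemma isClosed_densityMatrices : IsClosed (densityMatrices n) := by
  have h_eq : densityMatrices n = ({M | Mᴴ = M} ∩ ⋂ x : n → ℂ, {M | 0 ≤ star x ⬝ᵥ M *ᵥ x}) ∩
      {M | M.trace = 1} := by
    ext M
    simp [densityMatrices, posSemidef_iff_dotProduct_mulVec, IsHermitian]
  rw [h_eq]
  refine ((isClosed_eq continuous_id.matrix_conjTranspose continuous_id).inter
    (isClosed_iInter fun x => isClosed_Ici.preimage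
      (f := fun M : Matrix n n ℂ => star x ⬝ᵥ M *ᵥ x) ?_)).inter
    (isClosed_eq continuous_id.matrix_trace continuous_const)
  exact continuous_const.dotProduct (continuous_id.matrix_mulVec continuous_const)

lemma norm_apply_le_one_of_mem_densityMatrices {M : Matrix n n ℂ} (hM : M ∈ densityMatrices n)
    (i j : n) : ‖M i j‖ ≤ 1 := by
  have h_diag (a : n) : (M a a).re ≤ 1 := by
    have h_trace : ∑ b, (M b b).re = 1 := by
      simpa [Matrix.trace, Complex.re_sum] using congrArg Complex.re hM.2
    exact h_trace ▸ single_le_sum (f := fun b => (M b b).re)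
      (fun b _ => (Complex.nonneg_iff.mp hM.1.diag_nonneg).1) (mem_univ a)
  calc ‖M i j‖ ≤ √(M i i).re * √(M j j).re := hM.1.norm_apply_le i j
    _ ≤ 1 * 1 := mul_le_mul (Real.sqrt_le_one.mpr (h_diag i)) (Real.sqrt_le_one.mpr (h_diag j))
        (Real.sqrt_nonneg _) zero_le_one
    _ = 1 := one_mul 1

lemma isCompact_densityMatrices : IsCompact (densityMatrices n) :=
  .of_isClosed_subset (isCompact_univ_pi fun _ => isCompact_univ_pi fun _ =>
      isCompact_closedBall (0 : ℂ) 1) isClosed_densityMatrices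
    fun _ hM => Set.mem_univ_pi.mpr fun i => Set.mem_univ_pi.mpr fun j => by
      simpa using norm_apply_le_one_of_mem_densityMatrices hM i j

noncomputable def traceNormalize (M : Matrix n n ℂ) : Matrix n n ℂ :=
  (((M.trace.re)⁻¹ : ℝ) : ℂ) • M

noncomputable def tracePerspective (f : Matrix n n ℂ → ℝ) (M : Matrix n n ℂ) : ℝ :=
  M.trace.re * f (traceNormalize M)

lemma traceNormalize_mem_densityMatrices {M : Matrix n n ℂ} (hM : M.PosSemidef)
    (h : M.trace.re ≠ 0) : traceNormalize M ∈ densityMatrices n := by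
  refine ⟨hM.smul (Complex.zero_le_real.mpr (inv_nonneg.mpr hM.trace_re_nonneg)), ?_⟩
  rw [traceNormalize, trace_smul, smul_eq_mul]
  nth_rw 2 [← hM.ofReal_trace_re]
  rw [← Complex.ofReal_mul, inv_mul_cancel₀ h, Complex.ofReal_one]

lemma trace_re_sum_smul {ι : Type*} [Fintype ι] (w : ι → ℝ) (N : ι → Matrix n n ℂ) :
    (∑ i, (w i : ℂ) • N i).trace.re = ∑ i, w i * (N i).trace.re := by
  simp [trace_sum, Complex.re_sum]

variable [DecidableEq n]

lemma mixedRoof_le_of_isEnsemble {g : Matrix n n ℂ → ℝ} (hg : BddBelow (g '' densityMatrices n))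
    {k : ℕ} {p : Fin k → ℝ} {σs : Fin k → Matrix n n ℂ} {ρ : Matrix n n ℂ}
    (h : IsEnsemble p σs ρ) : mixedRoof g ρ ≤ ∑ i, p i * g (σs i) := by
  refine csInf_le ?_ ⟨k, p, σs, h, rfl⟩
  obtain ⟨c, hc⟩ := hg
  refine ⟨c, ?_⟩
  rintro _ ⟨m, q, τs, ⟨hq0, hq1, hτ, -⟩, rfl⟩
  calc c = ∑ i, q i * c := by rw [← sum_mul, hq1, one_mul]
    _ ≤ ∑ i, q i * g (τs i) :=
      sum_le_sum fun i _ => mul_le_mul_of_nonneg_left (hc ⟨τs i, hτ i, rfl⟩) (hq0 i)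

/-- The summands with `tr Nᵢ = 0` vanish, so any state can stand in for their normalisation. -/
lemma isEnsemble_traceNormalize_sum {m : ℕ} {w : Fin m → ℝ} (hw : ∀ i, 0 ≤ w i)
    {N : Fin m → Matrix n n ℂ} (hN : ∀ i, (N i).PosSemidef)
    (hM : (∑ i, (w i : ℂ) • N i).trace.re ≠ 0) :
    IsEnsemble (fun i => w i * (N i).trace.re / (∑ i, (w i : ℂ) • N i).trace.re)
      (fun i => if (N i).trace.re = 0 then traceNormalize (∑ i, (w i : ℂ) • N i)
        else traceNormalize (N i))
      (traceNormalize (∑ i, (w i : ℂ) • N i)) := by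
  set M := ∑ i, (w i : ℂ) • N i
  have hM_psd : M.PosSemidef := posSemidef_sum _ fun i _ =>
    (hN i).smul (Complex.zero_le_real.mpr (hw i))
  have h_trace : M.trace.re = ∑ i, w i * (N i).trace.re := trace_re_sum_smul w N
  refine ⟨fun i => div_nonneg (mul_nonneg (hw i) (hN i).trace_re_nonneg) hM_psd.trace_re_nonneg,
    by rw [← sum_div, ← h_trace, div_self hM], fun i => ?_, ?_⟩
  · dsimp only
    split_ifs with h
    exacts [traceNormalize_mem_densityMatrices hM_psd hM,
      traceNormalize_mem_densityMatrices (hN i) h]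
  · conv_rhs => rw [traceNormalize, smul_sum]
    refine sum_congr rfl fun i _ => ?_
    dsimp only
    split_ifs with h
    · simp [(hN i).eq_zero_of_trace_re_eq_zero h]
    · rw [traceNormalize, smul_smul, smul_smul]
      congr 1
      push_cast
      field_simp

lemma tracePerspective_mixedRoof_sum_le {g : Matrix n n ℂ → ℝ}
    (hg : BddBelow (g '' densityMatrices n)) {m : ℕ} {w : Fin m → ℝ} (hw : ∀ i, 0 ≤ w i)
    {N : Fin m → Matrix n n ℂ} (hN : ∀ i, (N i).PosSemidef) :
    tracePerspective (mixedRoof g) (∑ i, (w i : ℂ) • N i) ≤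
      ∑ i, w i * tracePerspective g (N i) := by
  set M := ∑ i, (w i : ℂ) • N i
  have h_trace : M.trace.re = ∑ i, w i * (N i).trace.re := trace_re_sum_smul w N
  have h_weight (i : Fin m) : 0 ≤ w i * (N i).trace.re := mul_nonneg (hw i) (hN i).trace_re_nonneg
  by_cases hM : M.trace.re = 0
  · have h_zero := (sum_eq_zero_iff_of_nonneg fun i _ => h_weight i).mp (h_trace ▸ hM)
    rw [tracePerspective, hM, zero_mul]
    refine (sum_eq_zero fun i hi => ?_).ge
    rw [tracePerspective, ← mul_assoc, h_zero i hi, zero_mul]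
  calc tracePerspective (mixedRoof g) M
      ≤ M.trace.re * ∑ i, w i * (N i).trace.re / M.trace.re *
          g (if (N i).trace.re = 0 then traceNormalize M else traceNormalize (N i)) :=
        mul_le_mul_of_nonneg_left
          (mixedRoof_le_of_isEnsemble hg (isEnsemble_traceNormalize_sum hw hN hM))
          (h_trace ▸ sum_nonneg fun i _ => h_weight i)
    _ = ∑ i, w i * ((N i).trace.re *
          g (if (N i).trace.re = 0 then traceNormalize M else traceNormalize (N i))) := by
        rw [mul_sum]
        refine sum_congr rfl fun i _ => ?_
        field_simp
    _ = ∑ i, w i * tracePerspective g (N i) := by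
        refine sum_congr rfl fun i _ => ?_
        split_ifs with h
        · simp [tracePerspective, h]
        · rfl

/-- `Φ k` is the subensemble map of outcome `k`: the outcome has probability `q_k = Tr(Φ k σ)`
and leaves the state `q_k⁻¹ • Φ k σ`. -/
theorem mixedRoof_monotone_on_average_general {n : Type} [Fintype n] [DecidableEq n]
    (g : Matrix n n ℂ → ℝ) (hcont : Continuous g)
    (K : ℕ) (Φ : Fin K → Matrix n n ℂ →ₗ[ℂ] Matrix n n ℂ)
    (hΦpos : ∀ σ : Matrix n n ℂ, σ.PosSemidef → σ.trace = 1 →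
      ∀ k, (Φ k σ).PosSemidef)
    (hg : ∀ σ : Matrix n n ℂ, σ.PosSemidef → σ.trace = 1 →
      ∑ k, (Φ k σ).trace.re * g (((((Φ k σ).trace.re)⁻¹ : ℝ) : ℂ) • Φ k σ) ≤ g σ)
    (hattain : ∀ ρ : Matrix n n ℂ, ρ.PosSemidef → ρ.trace = 1 →
      ∃ (k : ℕ) (p : Fin k → ℝ) (σs : Fin k → Matrix n n ℂ),
        IsEnsemble p σs ρ ∧ mixedRoof g ρ = ∑ i, p i * g (σs i))
    (ρ : Matrix n n ℂ) (hρ : ρ.PosSemidef) (hρ1 : ρ.trace = 1) :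
    ∑ k, (Φ k ρ).trace.re *
        mixedRoof g (((((Φ k ρ).trace.re)⁻¹ : ℝ) : ℂ) • Φ k ρ)
      ≤ mixedRoof g ρ := by
  have hbdd : BddBelow (g '' densityMatrices n) :=
    isCompact_densityMatrices.bddBelow_image hcont.continuousOn
  obtain ⟨m, p, σs, ⟨hp0, -, hσ, hρ_sum⟩, hroof⟩ := hattain ρ hρ hρ1
  have hΦρ (k : Fin K) : Φ k ρ = ∑ i, (p i : ℂ) • Φ k (σs i) := by
    simp [← hρ_sum, map_sum]
  calc ∑ k, tracePerspective (mixedRoof g) (Φ k ρ)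
      ≤ ∑ k, ∑ i, p i * tracePerspective g (Φ k (σs i)) := sum_le_sum fun k _ =>
        hΦρ k ▸ tracePerspective_mixedRoof_sum_le hbdd hp0 fun i => hΦpos _ (hσ i).1 (hσ i).2 k
    _ = ∑ i, p i * ∑ k, tracePerspective g (Φ k (σs i)) := by
        rw [sum_comm]
        simp only [mul_sum]
    _ ≤ ∑ i, p i * g (σs i) :=
        sum_le_sum fun i _ => mul_le_mul_of_nonneg_left (hg _ (hσ i).1 (hσ i).2) (hp0 i)
    _ = mixedRoof g ρ := hroof.symm

/-- if a continuous function `g` is monotone on average under a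
given measurement (described by the linear subensemble maps `Φ k`, with outcome
probabilities `q_k = Tr(Φ k σ)` and post-measurement states `q_k⁻¹ • Φ k σ`),
then its mixed convex roof `E_g` is also monotone on average under this
measurement. The attainment of the infimum by a finite ensemble (guaranteed by
continuity of `g`) is taken as a hypothesis. -/
theorem mixedRoof_monotone_on_average {n : Type} [Fintype n] [DecidableEq n]
    (g : Matrix n n ℂ → ℝ) (hcont : Continuous g)
    (K : ℕ) (Φ : Fin K → Matrix n n ℂ →ₗ[ℂ] Matrix n n ℂ)
    (hΦpos : ∀ σ : Matrix n n ℂ, σ.PosSemidef → σ.trace = 1 →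
      ∀ k, (Φ k σ).PosSemidef)
    (hΦtr : ∀ σ : Matrix n n ℂ, σ.PosSemidef → σ.trace = 1 →
      ∑ k, (Φ k σ).trace = 1)
    (hg : ∀ σ : Matrix n n ℂ, σ.PosSemidef → σ.trace = 1 →
      ∑ k, (Φ k σ).trace.re * g (((((Φ k σ).trace.re)⁻¹ : ℝ) : ℂ) • Φ k σ) ≤ g σ)
    (hattain : ∀ ρ : Matrix n n ℂ, ρ.PosSemidef → ρ.trace = 1 →
      ∃ (k : ℕ) (p : Fin k → ℝ) (σs : Fin k → Matrix n n ℂ),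
        IsEnsemble p σs ρ ∧ mixedRoof g ρ = ∑ i, p i * g (σs i))
    (ρ : Matrix n n ℂ) (hρ : ρ.PosSemidef) (hρ1 : ρ.trace = 1) :
    ∑ k, (Φ k ρ).trace.re *
        mixedRoof g (((((Φ k ρ).trace.re)⁻¹ : ℝ) : ℂ) • Φ k ρ)
      ≤ mixedRoof g ρ :=
  mixedRoof_monotone_on_average_general g hcont K Φ hΦpos hg hattain ρ hρ hρ1
end
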